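/- Let a, b, a', b' ∈ ℂ satisfy ab = a'b' and a³+b³ = a'³+b'³ (i.e. the two pairs have the same dihedral invariants u = ab and v = a³+b³). Let r₁,…,r₆ be the roots, with multiplicity over ℂ, of x⁶ + ax⁴ + bx² + 1, and let r₁',…,r₆' be the roots of x⁶ + a'x⁴ + b'x² + 1. Then 𝔄(r) = 𝔄(r'), 𝔅(r) = 𝔅(r'), ℭ(r) = ℭ(r') and 𝔇(r) = 𝔇(r'); that is, all Igusa invariants of the genus-2 curves y² = x⁶+ax⁴+bx²+1 and y² = x⁶+a'x⁴+b'x²+1 coincide, so the dihedral invariants (u,v) determine the point in the moduli space. -/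

import Mathlib

/-!
Root-difference invariants `𝔄, 𝔅, ℭ, 𝔇` of a sextic with roots `r 0, …, r 5`,
with sums over partitions of `{1,…,6}` into pairs/triples encoded as normalized
sums over all permutations of `Fin 6` (48 permutations correspond to each pair
partition, 72 to each triple partition, 12 to each (triple partition, bijection)).
-/

noncomputable def invA (r : Fin 6 → ℂ) : ℂ :=
  (1 / 48 : ℂ) * ∑ σ : Equiv.Perm (Fin 6),
    (r (σ 0) - r (σ 1)) ^ 2 * (r (σ 2) - r (σ 3)) ^ 2 * (r (σ 4) - r (σ 5)) ^ 2

noncomputable def tripleTerm (r : Fin 6 → ℂ) (i j k : Fin 6) : ℂ :=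
  (r i - r j) ^ 2 * (r j - r k) ^ 2 * (r k - r i) ^ 2

noncomputable def invB (r : Fin 6 → ℂ) : ℂ :=
  (1 / 72 : ℂ) * ∑ σ : Equiv.Perm (Fin 6),
    tripleTerm r (σ 0) (σ 1) (σ 2) * tripleTerm r (σ 3) (σ 4) (σ 5)

noncomputable def invC (r : Fin 6 → ℂ) : ℂ :=
  (1 / 12 : ℂ) * ∑ σ : Equiv.Perm (Fin 6),
    tripleTerm r (σ 0) (σ 1) (σ 2) * tripleTerm r (σ 3) (σ 4) (σ 5) *
      ((r (σ 0) - r (σ 3)) ^ 2 * (r (σ 1) - r (σ 4)) ^ 2 * (r (σ 2) - r (σ 5)) ^ 2)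

noncomputable def invD (r : Fin 6 → ℂ) : ℂ :=
  ∏ i : Fin 6, ∏ j ∈ Finset.Ioi i, (r i - r j) ^ 2

/-!
The four invariants are symmetric in the roots and weighted homogeneous: scaling the roots by `c`
multiplies `𝔄, 𝔅, ℭ, 𝔇` by `c⁶, c¹², c¹⁸, c³⁰`, and inverting them divides the invariants by
`(∏ rᵢ)²`, `(∏ rᵢ)⁴`, `(∏ rᵢ)⁶`, `(∏ rᵢ)¹⁰`. Equal dihedral invariants force
`(a'³ - a³)(a'³ - b³) = 0`, hence `(a', b') = (ζa, ζ²b)` or `(ζb, ζ²a)` for a cube root of unity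
`ζ`. Correspondingly the roots `r'` are, up to order, the `ζ²rᵢ` or the `ζ²/rᵢ`; as `∏ rᵢ = 1`
and `(ζ²)⁶ = 1`, none of the invariants changes.
-/

open Finset Polynomial

theorem ne_zero_of_prod_eq_one {ι M : Type*} [Fintype ι] [CommMonoidWithZero M] [Nontrivial M]
    {r : ι → M} (h : ∏ i, r i = 1) (i : ι) : r i ≠ 0 :=
  fun hi => one_ne_zero (h ▸ prod_eq_zero (mem_univ i) hi)

theorem exists_perm_eq_comp_of_map_eq {ι α : Type*} [Fintype ι] {f g : ι → α}
    (h : univ.val.map f = univ.val.map g) : ∃ e : Equiv.Perm ι, g = f ∘ e := by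
  classical
  have card_fiber_eq (z : α) :
      Fintype.card {i // g i = z} = Fintype.card {i // f i = z} := by
    have := congrArg (Multiset.count z) h.symm
    simp only [Multiset.count_map, eq_comm (a := z)] at this
    simpa [Fintype.card_subtype, Finset.card_def, Finset.filter_val] using this
  exact ⟨Equiv.ofFiberEquiv fun z => Fintype.equivOfCardEq (card_fiber_eq z),
    funext fun i => (Equiv.ofFiberEquiv_map _ i).symm⟩

theorem map_univ_eq_of_prod_sub_eq {ι R : Type*} [Fintype ι] [CommRing R] [IsDomain R]
    [Infinite R] {s t : ι → R} (h : ∀ x, ∏ i, (x - s i) = ∏ i, (x - t i)) :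
    univ.val.map s = univ.val.map t := by
  have prod_eq (f : ι → R) : ∏ i, (X - C (f i)) = ((univ.val.map f).map (X - C ·)).prod := by
    rw [Multiset.map_map]; rfl
  have hpoly : ∏ i, (X - C (s i)) = ∏ i, (X - C (t i)) :=
    Polynomial.funext fun x => by simpa [eval_prod] using h x
  simpa only [prod_eq, roots_multiset_prod_X_sub_C] using congrArg roots hpoly

theorem exists_eq_mul_of_pow_eq_pow {K : Type*} [Field K] {n : ℕ} (hn : n ≠ 0) {p q : K}
    (h : q ^ n = p ^ n) : ∃ ω : K, ω ^ n = 1 ∧ q = ω * p := by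
  by_cases hp : p = 0
  · subst hp
    exact ⟨1, one_pow n, by simpa using (pow_eq_zero_iff hn).mp (h.trans (zero_pow hn))⟩
  · exact ⟨q / p, by rw [div_pow, h, div_self (pow_ne_zero n hp)], by field_simp⟩

theorem exists_cube_root_of_unity_scaling {K : Type*} [Field K] {p q p' q' : K}
    (hp : p' ^ 3 = p ^ 3) (hq : q' ^ 3 = q ^ 3) (hpq : p * q = p' * q') :
    ∃ ζ : K, ζ ^ 3 = 1 ∧ p' = ζ * p ∧ q' = ζ ^ 2 * q := by
  obtain ⟨ω, hω, rfl⟩ := exists_eq_mul_of_pow_eq_pow three_ne_zero hp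
  obtain ⟨η, hη, rfl⟩ := exists_eq_mul_of_pow_eq_pow three_ne_zero hq
  by_cases hp0 : p = 0
  · exact ⟨η ^ 2, by linear_combination (η ^ 3 + 1) * hη, by simp [hp0],
      by linear_combination (-η * q) * hη⟩
  by_cases hq0 : q = 0
  · exact ⟨ω, hω, rfl, by simp [hq0]⟩
  have hωη : ω * η = 1 :=
    mul_left_cancel₀ (mul_ne_zero hp0 hq0) (by linear_combination -hpq)
  exact ⟨ω, hω, rfl, by linear_combination (-η * q) * hω + (ω ^ 2 * q) * hωη⟩

theorem dihedral_cases {a b a' b' : ℂ} (hu : a * b = a' * b')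
    (hv : a ^ 3 + b ^ 3 = a' ^ 3 + b' ^ 3) :
    (∃ ζ : ℂ, ζ ^ 3 = 1 ∧ a' = ζ * a ∧ b' = ζ ^ 2 * b) ∨
      (∃ ζ : ℂ, ζ ^ 3 = 1 ∧ a' = ζ * b ∧ b' = ζ ^ 2 * a) := by
  have key : (a' ^ 3 - a ^ 3) * (a' ^ 3 - b ^ 3) = 0 := by
    linear_combination (-a' ^ 3) * hv + (a ^ 2 * b ^ 2 + a * b * (a' * b') + a' ^ 2 * b' ^ 2) * hu
  rcases mul_eq_zero.mp key with h | h
  · exact .inl <| exists_cube_root_of_unity_scaling (by linear_combination h)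
      (by linear_combination -hv - h) hu
  · exact .inr <| exists_cube_root_of_unity_scaling (by linear_combination h)
      (by linear_combination -hv - h) (by linear_combination hu)

section Invariants

variable (r : Fin 6 → ℂ)

theorem invA_comp_perm (e : Equiv.Perm (Fin 6)) : invA (r ∘ e) = invA r := by
  unfold invA
  exact congrArg _ (Fintype.sum_equiv (Equiv.mulLeft e) _ _ fun _ => rfl)

theorem invB_comp_perm (e : Equiv.Perm (Fin 6)) : invB (r ∘ e) = invB r := by
  unfold invB
  exact congrArg _ (Fintype.sum_equiv (Equiv.mulLeft e) _ _ fun _ => rfl)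

theorem invC_comp_perm (e : Equiv.Perm (Fin 6)) : invC (r ∘ e) = invC r := by
  unfold invC
  exact congrArg _ (Fintype.sum_equiv (Equiv.mulLeft e) _ _ fun _ => rfl)

theorem invD_eq_det_vandermonde_sq : invD r = (Matrix.vandermonde r).det ^ 2 := by
  rw [Matrix.det_vandermonde, ← prod_pow]
  refine prod_congr rfl fun i _ => ?_
  rw [← prod_pow]
  exact prod_congr rfl fun j _ => by ring

theorem invD_comp_perm (e : Equiv.Perm (Fin 6)) : invD (r ∘ e) = invD r := by
  have : Matrix.vandermonde (r ∘ e) = (Matrix.vandermonde r).submatrix e id := rfl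
  rw [invD_eq_det_vandermonde_sq, invD_eq_det_vandermonde_sq, this, Matrix.det_permute, mul_pow,
    ← Int.cast_pow, ← Units.val_pow_eq_pow_val, Int.units_sq]
  simp

theorem tripleTerm_smul (c : ℂ) (i j k : Fin 6) :
    tripleTerm (c • r) i j k = c ^ 6 * tripleTerm r i j k := by
  simp only [tripleTerm, Pi.smul_apply, smul_eq_mul]
  ring

theorem invA_smul (c : ℂ) : invA (c • r) = c ^ 6 * invA r := by
  simp only [invA, mul_sum, Pi.smul_apply, smul_eq_mul]
  exact sum_congr rfl fun σ _ => by ring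

theorem invB_smul (c : ℂ) : invB (c • r) = c ^ 12 * invB r := by
  simp only [invB, tripleTerm_smul, mul_sum]
  exact sum_congr rfl fun σ _ => by ring

theorem invC_smul (c : ℂ) : invC (c • r) = c ^ 18 * invC r := by
  simp only [invC, tripleTerm_smul, mul_sum, Pi.smul_apply, smul_eq_mul]
  exact sum_congr rfl fun σ _ => by ring

theorem invD_smul (c : ℂ) : invD (c • r) = c ^ 30 * invD r := by
  simp only [invD, Pi.smul_apply, smul_eq_mul, ← mul_sub, mul_pow, prod_mul_distrib, prod_const]
  congr 1
  simp [Fin.prod_univ_succ]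
  ring

variable {r}

theorem tripleTerm_inv (hr : ∀ i, r i ≠ 0) (i j k : Fin 6) :
    tripleTerm r⁻¹ i j k = tripleTerm r i j k / (r i * r j * r k) ^ 4 := by
  simp only [tripleTerm, Pi.inv_apply]
  field_simp [hr]
  ring

theorem invA_inv (hr : ∀ i, r i ≠ 0) : invA r⁻¹ = invA r / (∏ i, r i) ^ 2 := by
  simp only [invA, mul_div_assoc, sum_div, Pi.inv_apply]
  congr 1
  refine sum_congr rfl fun σ _ => ?_
  rw [← Equiv.prod_comp σ, Fin.prod_univ_six]
  field_simp [hr]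
  ring

theorem invB_inv (hr : ∀ i, r i ≠ 0) : invB r⁻¹ = invB r / (∏ i, r i) ^ 4 := by
  simp only [invB, tripleTerm_inv hr, mul_div_assoc, sum_div]
  congr 1
  refine sum_congr rfl fun σ _ => ?_
  rw [← Equiv.prod_comp σ, Fin.prod_univ_six]
  field_simp [hr]

theorem invC_inv (hr : ∀ i, r i ≠ 0) : invC r⁻¹ = invC r / (∏ i, r i) ^ 6 := by
  simp only [invC, tripleTerm_inv hr, mul_div_assoc, sum_div, Pi.inv_apply]
  congr 1
  refine sum_congr rfl fun σ _ => ?_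
  rw [← Equiv.prod_comp σ, Fin.prod_univ_six]
  field_simp [hr]
  ring

theorem invD_inv (hr : ∀ i, r i ≠ 0) : invD r⁻¹ = invD r / (∏ i, r i) ^ 10 := by
  simp only [invD, Pi.inv_apply, inv_sub_inv (hr _) (hr _), div_pow, prod_div_distrib]
  congr 1
  · exact prod_congr rfl fun i _ => prod_congr rfl fun j _ => by ring
  · simp [Fin.prod_univ_succ]
    ring

end Invariants

noncomputable def igusaInvariants (r : Fin 6 → ℂ) : ℂ × ℂ × ℂ × ℂ :=
  (invA r, invB r, invC r, invD r)

theorem igusaInvariants_comp_perm (r : Fin 6 → ℂ) (e : Equiv.Perm (Fin 6)) :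
    igusaInvariants (r ∘ e) = igusaInvariants r := by
  simp only [igusaInvariants, invA_comp_perm, invB_comp_perm, invC_comp_perm, invD_comp_perm]

theorem igusaInvariants_smul (r : Fin 6 → ℂ) {c : ℂ} (hc : c ^ 6 = 1) :
    igusaInvariants (c • r) = igusaInvariants r := by
  simp [igusaInvariants, invA_smul, invB_smul, invC_smul, invD_smul,
    show c ^ 12 = (c ^ 6) ^ 2 by ring, show c ^ 18 = (c ^ 6) ^ 3 by ring,
    show c ^ 30 = (c ^ 6) ^ 5 by ring, hc]

theorem igusaInvariants_inv {r : Fin 6 → ℂ} (hr : ∏ i, r i = 1) :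
    igusaInvariants r⁻¹ = igusaInvariants r := by
  have hr0 := ne_zero_of_prod_eq_one hr
  simp [igusaInvariants, invA_inv hr0, invB_inv hr0, invC_inv hr0, invD_inv hr0, hr]

def AreSexticRoots (a b : ℂ) (r : Fin 6 → ℂ) : Prop :=
  ∀ x : ℂ, x ^ 6 + a * x ^ 4 + b * x ^ 2 + 1 = ∏ i, (x - r i)

namespace AreSexticRoots

variable {a b : ℂ} {r : Fin 6 → ℂ}

theorem prod_eq_one (h : AreSexticRoots a b r) : ∏ i, r i = 1 := by
  simpa [Fin.prod_univ_six] using (h 0).symm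

theorem exists_perm_eq_comp {r' : Fin 6 → ℂ} (h : AreSexticRoots a b r)
    (h' : AreSexticRoots a b r') : ∃ e : Equiv.Perm (Fin 6), r' = r ∘ e :=
  exists_perm_eq_comp_of_map_eq (map_univ_eq_of_prod_sub_eq fun x => (h x).symm.trans (h' x))

theorem smul (h : AreSexticRoots a b r) {ζ : ℂ} (hζ : ζ ^ 3 = 1) :
    AreSexticRoots (ζ * a) (ζ ^ 2 * b) (ζ ^ 2 • r) := by
  intro x
  calc x ^ 6 + ζ * a * x ^ 4 + ζ ^ 2 * b * x ^ 2 + 1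
      = (ζ ^ 2) ^ 6 * ((ζ * x) ^ 6 + a * (ζ * x) ^ 4 + b * (ζ * x) ^ 2 + 1) := by
        rw [show (ζ ^ 2) ^ 6 = (ζ ^ 3) ^ 4 by ring, hζ, one_pow, one_mul]
        linear_combination (-(ζ ^ 3 + 1) * x ^ 6 - a * x ^ 4 * ζ) * hζ
    _ = ∏ i, (ζ ^ 2 * (ζ * x - r i)) := by rw [h, prod_mul_distrib, Fin.prod_const]
    _ = ∏ i, (x - (ζ ^ 2 • r) i) := prod_congr rfl fun i _ => by
        simp only [Pi.smul_apply, smul_eq_mul]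
        linear_combination x * hζ

theorem inv (h : AreSexticRoots a b r) : AreSexticRoots b a r⁻¹ := by
  have hr := h.prod_eq_one
  intro x
  rcases eq_or_ne x 0 with rfl | hx
  · norm_num [prod_neg, prod_inv_distrib, hr]
  calc x ^ 6 + b * x ^ 4 + a * x ^ 2 + 1
      = (-x) ^ 6 * (∏ i, (r i)⁻¹) * (x⁻¹ ^ 6 + a * x⁻¹ ^ 4 + b * x⁻¹ ^ 2 + 1) := by
        rw [prod_inv_distrib, hr]
        field_simp
        ring
    _ = ∏ i, (-x * (r i)⁻¹ * (x⁻¹ - r i)) := by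
        rw [h, prod_mul_distrib, prod_mul_distrib, Fin.prod_const]
    _ = ∏ i, (x - r⁻¹ i) := prod_congr rfl fun i _ => by
        rw [Pi.inv_apply]
        field_simp [ne_zero_of_prod_eq_one hr i]
        ring

end AreSexticRoots

/-- If two pairs `(a,b)` and `(a',b')` have the same dihedral invariants
`u = ab` and `v = a³+b³`, then the root-difference invariants `𝔄, 𝔅, ℭ, 𝔇` of
the sextics `x⁶+ax⁴+bx²+1` and `x⁶+a'x⁴+b'x²+1` coincide: the dihedral invariants
`(u,v)` determine the point in the moduli space. -/
theorem dihedral_invariants_determine_igusa_invariants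
    (a b a' b' : ℂ) (hu : a * b = a' * b') (hv : a ^ 3 + b ^ 3 = a' ^ 3 + b' ^ 3)
    (r r' : Fin 6 → ℂ)
    (hr : ∀ x : ℂ, x ^ 6 + a * x ^ 4 + b * x ^ 2 + 1 = ∏ i, (x - r i))
    (hr' : ∀ x : ℂ, x ^ 6 + a' * x ^ 4 + b' * x ^ 2 + 1 = ∏ i, (x - r' i)) :
    invA r = invA r' ∧ invB r = invB r' ∧ invC r = invC r' ∧ invD r = invD r' := by
  have h : AreSexticRoots a b r := hr
  have h' : AreSexticRoots a' b' r' := hr'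
  suffices igusaInvariants r' = igusaInvariants r by simpa [igusaInvariants] using this.symm
  have unit_of_cube {ζ : ℂ} (hζ : ζ ^ 3 = 1) : (ζ ^ 2) ^ 6 = 1 := by
    rw [show (ζ ^ 2) ^ 6 = (ζ ^ 3) ^ 4 by ring, hζ, one_pow]
  obtain ⟨ζ, hζ, rfl, rfl⟩ | ⟨ζ, hζ, rfl, rfl⟩ := dihedral_cases hu hv
  · obtain ⟨e, rfl⟩ := (h.smul hζ).exists_perm_eq_comp h'
    rw [igusaInvariants_comp_perm, igusaInvariants_smul _ (unit_of_cube hζ)]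
  · obtain ⟨e, rfl⟩ := (h.inv.smul hζ).exists_perm_eq_comp h'
    rw [igusaInvariants_comp_perm, igusaInvariants_smul _ (unit_of_cube hζ),
      igusaInvariants_inv h.prod_eq_one]
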